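/- arXiv:1403.0388 — 2 statements merged into one kernel-verified Lean document; each statement's English description precedes it below -/
import Mathlib

section
/- Let β ∈ (0,1) be a real number, n ≥ 1 and N natural numbers, x : Fin n → Fin N → Bool the experts' predictions, and c : Fin N → Bool the correct labels. For an expert i and a time t ≤ N, let mist i t denote the number of trials j < t with x i j ≠ c j, let w i t = β^(mist i t), and let W t = ∑_{i} w i t. For each trial t, let F t = (∑_{i : x i t ≠ c t} w i t) / W t. Then the final total weight satisfies W N = n * ∏_{t < N} (1 - (1-β) * F t). -/
/-- Number of mistakes expert `i` made during the first `t` trials. -/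
def mist {n N : ℕ} (x : Fin n → Fin N → Bool) (c : Fin N → Bool)
    (i : Fin n) (t : ℕ) : ℕ :=
  (Finset.univ.filter (fun j : Fin N => (j : ℕ) < t ∧ x i j ≠ c j)).card

/-- Weight of expert `i` just before trial `t`. -/
noncomputable def w (β : ℝ) {n N : ℕ} (x : Fin n → Fin N → Bool) (c : Fin N → Bool)
    (i : Fin n) (t : ℕ) : ℝ :=
  β ^ (mist x c i t)

/-- Total weight just before trial `t`. -/
noncomputable def W (β : ℝ) {n N : ℕ} (x : Fin n → Fin N → Bool) (c : Fin N → Bool)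
    (t : ℕ) : ℝ :=
  ∑ i : Fin n, w β x c i t

/-- Fraction of the total weight placed on the wrong answer at trial `t`. -/
noncomputable def F (β : ℝ) {n N : ℕ} (x : Fin n → Fin N → Bool) (c : Fin N → Bool)
    (t : Fin N) : ℝ :=
  (∑ i ∈ Finset.univ.filter (fun i : Fin n => x i t ≠ c t), w β x c i (t : ℕ)) /
    W β x c (t : ℕ)

/-!
A mistake multiplies an expert's weight by `β`, so trial `t` removes the fraction `(1 - β) F t`
of the total weight: `W (t + 1) = W t (1 - (1 - β) F t)`. Every `W t` is a nonempty sum of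
positive powers of `β`, so the division in `F` is genuine, and telescoping from `W 0 = n` gives
the product.
-/

theorem Fin.eq_mul_prod_of_succ_eq_mul {M : Type*} [CommMonoid M] {N : ℕ} (f : ℕ → M)
    (g : Fin N → M) (h : ∀ t : Fin N, f (t + 1) = f t * g t) :
    f N = f 0 * ∏ t, g t := by
  induction N with
  | zero => simp
  | succ N ih =>
    rw [Fin.prod_univ_castSucc, ← mul_assoc, ← ih _ (fun t => h t.castSucc)]
    exact h (Fin.last N)

section WeightedMajority

variable {n N : ℕ} (x : Fin n → Fin N → Bool) (c : Fin N → Bool)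

lemma mist_zero (i : Fin n) : mist x c i 0 = 0 := by
  simp [mist]

lemma mist_eq_card_filter_Iio (i : Fin n) (t : Fin N) :
    mist x c i t = ((Finset.Iio t).filter (fun j => x i j ≠ c j)).card := by
  rw [mist, ← Finset.filter_filter]
  congr 1
  ext j
  simp

lemma mist_succ_eq_card_filter_Iic (i : Fin n) (t : Fin N) :
    mist x c i (t + 1) = ((Finset.Iic t).filter (fun j => x i j ≠ c j)).card := by
  rw [mist, ← Finset.filter_filter]
  congr 1
  ext j
  simp only [Finset.mem_filter, Finset.mem_univ, true_and, Finset.mem_Iic, Fin.le_iff_val_le_val,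
    Nat.lt_succ_iff]

lemma mist_succ (i : Fin n) (t : Fin N) :
    mist x c i (t + 1) = mist x c i t + if x i t = c t then 0 else 1 := by
  rw [mist_succ_eq_card_filter_Iic, mist_eq_card_filter_Iio, ← Finset.Iio_insert,
    Finset.filter_insert]
  by_cases h : x i t = c t
  · simp [h]
  · simp [h, Finset.card_insert_of_notMem]

lemma W_pos {β : ℝ} (hβ : 0 < β) (hn : 1 ≤ n) (t : ℕ) : 0 < W β x c t :=
  Finset.sum_pos (fun _ _ => pow_pos hβ _) (Finset.univ_nonempty_iff.2 ⟨⟨0, hn⟩⟩)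

variable (β : ℝ)

lemma w_zero (i : Fin n) : w β x c i 0 = 1 := by
  simp [w, mist_zero]

lemma w_succ (i : Fin n) (t : Fin N) :
    w β x c i (t + 1) = w β x c i t * if x i t = c t then 1 else β := by
  rw [w, w, mist_succ, pow_add]
  split_ifs <;> simp

lemma W_zero : W β x c 0 = n := by
  simp [W, w_zero]

lemma W_succ (t : Fin N) :
    W β x c (t + 1) =
      W β x c t - (1 - β) * ∑ i ∈ Finset.univ.filter (fun i => x i t ≠ c t), w β x c i t := by
  have hw : ∀ i, w β x c i (t + 1) =
      w β x c i t - (1 - β) * if x i t ≠ c t then w β x c i t else 0 := by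
    intro i
    by_cases h : x i t = c t
    · simp [w_succ, h]
    · simp [w_succ, h]
      ring
  simp only [W, hw, Finset.sum_sub_distrib, ← Finset.mul_sum, Finset.sum_filter]

lemma W_succ_eq_mul {t : Fin N} (hW : W β x c t ≠ 0) :
    W β x c (t + 1) = W β x c t * (1 - (1 - β) * F β x c t) := by
  rw [W_succ, F]
  field_simp

end WeightedMajority

theorem rwm_final_weight_product_general
    (β : ℝ) (hβ0 : 0 < β)
    (n N : ℕ) (hn : 1 ≤ n)
    (x : Fin n → Fin N → Bool) (c : Fin N → Bool) :
    W β x c N = (n : ℝ) * ∏ t : Fin N, (1 - (1 - β) * F β x c t) := by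
  rw [← W_zero x c β]
  exact Fin.eq_mul_prod_of_succ_eq_mul (W β x c) _
    fun t => W_succ_eq_mul x c β (W_pos x c hβ0 hn t).ne'

theorem rwm_final_weight_product
    (β : ℝ) (hβ0 : 0 < β) (hβ1 : β < 1)
    (n N : ℕ) (hn : 1 ≤ n)
    (x : Fin n → Fin N → Bool) (c : Fin N → Bool) :
    W β x c N = (n : ℝ) * ∏ t : Fin N, (1 - (1 - β) * F β x c t) :=
  rwm_final_weight_product_general β hβ0 n N hn x c
end

section
/- Let β ∈ (0,1) be a real number, n ≥ 1 a natural number, and for each j ∈ {1,2,3} let t_j be a natural number and F_j : Fin t_j → ℝ satisfy 0 ≤ F_j i ≤ 1 for all i. Let m_1, m_2, m_3 be natural numbers such that for each j, n * ∏_{i} (1 - (1-β) * F_j i) ≥ β^(m_j). Then ∑_{j=1}^{3} ∑_{i} F_j i ≤ ((m_1 + m_2 + m_3) * ln(1/β) + 3 * ln n) / (1 - β). -/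
/-! Each learner's total weight starts at `n` (one unit per expert), shrinks by the factor
`1 - (1 - β) F` at every trial, and never drops below the weight `β ^ m` of its best expert.
Since `1 - x ≤ exp (-x)`, taking logarithms gives `(1 - β) ∑ F ≤ m log (1/β) + log n` for each
learner, and the three bounds add up. -/

open Real

lemma Finset.prod_one_sub_le_exp_neg_sum {ι : Type*} (s : Finset ι) (x : ι → ℝ)
    (hx : ∀ i ∈ s, x i ≤ 1) : ∏ i ∈ s, (1 - x i) ≤ exp (-∑ i ∈ s, x i) := by
  rw [← Finset.sum_neg_distrib, exp_sum]
  exact Finset.prod_le_prod (fun i hi => sub_nonneg.2 (hx i hi))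
    fun i _ => one_sub_le_exp_neg (x i)

theorem weightedMajority_expected_mistakes_le {ι : Type*} [Fintype ι] {β n : ℝ}
    (hβ0 : 0 < β) (hβ1 : β ≤ 1) (F : ι → ℝ) (hF : ∀ i, F i ≤ 1) (m : ℕ)
    (h : β ^ m ≤ n * ∏ i, (1 - (1 - β) * F i)) :
    (1 - β) * ∑ i, F i ≤ m * log (1 / β) + log n := by
  have hweight : ∀ i, (1 - β) * F i ≤ 1 := fun i => by nlinarith [hF i]
  have hprod_nonneg : 0 ≤ ∏ i, (1 - (1 - β) * F i) :=
    Finset.prod_nonneg fun i _ => sub_nonneg.2 (hweight i)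
  have hn : 0 < n := pos_of_mul_pos_left ((pow_pos hβ0 m).trans_le h) hprod_nonneg
  have hupper : β ^ m ≤ n * exp (-((1 - β) * ∑ i, F i)) := by
    refine h.trans (mul_le_mul_of_nonneg_left ?_ hn.le)
    rw [Finset.mul_sum]
    exact Finset.prod_one_sub_le_exp_neg_sum _ _ fun i _ => hweight i
  have hlog := log_le_log (pow_pos hβ0 m) hupper
  rw [log_pow, log_mul hn.ne' (exp_pos _).ne', log_exp] at hlog
  rw [one_div, log_inv]
  linarith

theorem crwm_mistake_bound_core_general
    (β : ℝ) (hβ0 : 0 < β) (hβ1 : β < 1)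
    (n : ℕ)
    (t₁ t₂ t₃ : ℕ)
    (F₁ : Fin t₁ → ℝ) (F₂ : Fin t₂ → ℝ) (F₃ : Fin t₃ → ℝ)
    (hF₁ : ∀ i, 0 ≤ F₁ i ∧ F₁ i ≤ 1)
    (hF₂ : ∀ i, 0 ≤ F₂ i ∧ F₂ i ≤ 1)
    (hF₃ : ∀ i, 0 ≤ F₃ i ∧ F₃ i ≤ 1)
    (m₁ m₂ m₃ : ℕ)
    (h₁ : (n : ℝ) * ∏ i, (1 - (1 - β) * F₁ i) ≥ β ^ m₁)
    (h₂ : (n : ℝ) * ∏ i, (1 - (1 - β) * F₂ i) ≥ β ^ m₂)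
    (h₃ : (n : ℝ) * ∏ i, (1 - (1 - β) * F₃ i) ≥ β ^ m₃) :
    (∑ i, F₁ i) + (∑ i, F₂ i) + (∑ i, F₃ i) ≤
      (((m₁ : ℝ) + m₂ + m₃) * Real.log (1 / β) + 3 * Real.log n) / (1 - β) := by
  have b₁ := weightedMajority_expected_mistakes_le hβ0 hβ1.le F₁ (fun i => (hF₁ i).2) m₁ h₁
  have b₂ := weightedMajority_expected_mistakes_le hβ0 hβ1.le F₂ (fun i => (hF₂ i).2) m₂ h₂
  have b₃ := weightedMajority_expected_mistakes_le hβ0 hβ1.le F₃ (fun i => (hF₃ i).2) m₃ h₃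
  rw [le_div_iff₀ (sub_pos.2 hβ1)]
  linarith

theorem crwm_mistake_bound_core
    (β : ℝ) (hβ0 : 0 < β) (hβ1 : β < 1)
    (n : ℕ) (hn : 1 ≤ n)
    (t₁ t₂ t₃ : ℕ)
    (F₁ : Fin t₁ → ℝ) (F₂ : Fin t₂ → ℝ) (F₃ : Fin t₃ → ℝ)
    (hF₁ : ∀ i, 0 ≤ F₁ i ∧ F₁ i ≤ 1)
    (hF₂ : ∀ i, 0 ≤ F₂ i ∧ F₂ i ≤ 1)
    (hF₃ : ∀ i, 0 ≤ F₃ i ∧ F₃ i ≤ 1)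
    (m₁ m₂ m₃ : ℕ)
    (h₁ : (n : ℝ) * ∏ i, (1 - (1 - β) * F₁ i) ≥ β ^ m₁)
    (h₂ : (n : ℝ) * ∏ i, (1 - (1 - β) * F₂ i) ≥ β ^ m₂)
    (h₃ : (n : ℝ) * ∏ i, (1 - (1 - β) * F₃ i) ≥ β ^ m₃) :
    (∑ i, F₁ i) + (∑ i, F₂ i) + (∑ i, F₃ i) ≤
      (((m₁ : ℝ) + m₂ + m₃) * Real.log (1 / β) + 3 * Real.log n) / (1 - β) :=
  crwm_mistake_bound_core_general β hβ0 hβ1 n t₁ t₂ t₃ F₁ F₂ F₃ hF₁ hF₂ hF₃ m₁ m₂ m₃ h₁ h₂ h₃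
end
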